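/- arXiv:2311.18277 — 2 statements merged into one kernel-verified Lean document; each statement's English description precedes it below -/
import Mathlib

section
/- (L¹ smoothing bias bound.) Let g be an absolutely continuous probability density on ℝ whose weak derivative g' is Lebesgue integrable. For λ > 0 define the Gaussian smoothing g_λ(x) = λ⁻¹ ∫ g(x−t) φ(t/λ) dt, where φ is the standard Gaussian density. Then ∫ |g_λ(x) − g(x)| dx ≤ 4 λ E|Z| · ∫ |g'(z)| dz, where Z is a standard Gaussian random variable, i.e., E|Z| = √(2/π). -/
/-!
Write `g_λ(x) - g(x) = ∫ (g(x - t) - g(x)) φ_λ(t) dt` with `φ_λ(t) = λ⁻¹ φ(t / λ)`, a kernel of unit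
mass. Since `|g(x - t) - g(x)|` is at most the integral of `|g'|` over the interval between `x - t`
and `x`, Tonelli gives `∫ |g(x - t) - g(x)| dx ≤ |t| ∫ |g'|`, and a second application of Tonelli
gives `∫ |g_λ - g| ≤ (∫ |t| φ_λ(t) dt) ∫ |g'| = λ E|Z| ∫ |g'|`: the bound holds with constant 1.
-/

open MeasureTheory

noncomputable section

/-- `f` is a probability density on `ℝ`. -/
def IsProbDensity (f : ℝ → ℝ) : Prop :=
  (∀ x, 0 ≤ f x) ∧ Integrable f ∧ ∫ x, f x = 1

/-- The standard Gaussian density `φ(x) = (2π)^{-1/2} e^{-x²/2}`. -/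
def gaussPdf (x : ℝ) : ℝ := (Real.sqrt (2 * Real.pi))⁻¹ * Real.exp (-(x ^ 2) / 2)

open Real Set ProbabilityTheory
open scoped Interval

lemma integral_norm_le_of_lintegral_enorm_le {α E : Type*} [MeasurableSpace α] {μ : Measure α}
    [NormedAddCommGroup E] {f : α → E} {c : ℝ} (hc : 0 ≤ c)
    (h : ∫⁻ x, ‖f x‖ₑ ∂μ ≤ ENNReal.ofReal c) : ∫ x, ‖f x‖ ∂μ ≤ c := by
  by_cases hf : Integrable (fun x => ‖f x‖) μ
  · rw [← ENNReal.ofReal_le_ofReal_iff hc, ofReal_integral_eq_lintegral_ofReal hf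
      (.of_forall fun _ => norm_nonneg _)]
    simpa only [ofReal_norm] using h
  · rw [integral_undef hf]
    exact hc

section AbsolutelyContinuous

variable {g g' : ℝ → ℝ}

lemma continuous_of_sub_eq_intervalIntegral (hAC : ∀ a b : ℝ, g b - g a = ∫ x in a..b, g' x)
    (hg' : Integrable g') : Continuous g := by
  have hg : g = fun x => g 0 + ∫ s in (0 : ℝ)..x, g' s := by
    funext x; rw [← hAC]; ring
  rw [hg]
  exact continuous_const.add
    (intervalIntegral.continuous_primitive (fun _ _ => hg'.intervalIntegrable) 0)

lemma abs_sub_le_integral_abs_of_sub_eq_intervalIntegral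
    (hAC : ∀ a b : ℝ, g b - g a = ∫ x in a..b, g' x) (hg' : Integrable g') (a b : ℝ) :
    |g b - g a| ≤ ∫ x, |g' x| := by
  rw [hAC]
  exact intervalIntegral.norm_integral_le_integral_norm_uIoc.trans
    (setIntegral_le_integral hg'.norm (.of_forall fun _ => norm_nonneg _))

lemma enorm_comp_sub_sub_le_of_sub_eq_intervalIntegral
    (hAC : ∀ a b : ℝ, g b - g a = ∫ x in a..b, g' x) (x t : ℝ) :
    ‖g (x - t) - g x‖ₑ ≤ ∫⁻ s in Ι 0 t, ‖g' (x - s)‖ₑ := by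
  have hdiff : g (x - t) - g x = -∫ s in (0 : ℝ)..t, g' (x - s) := by
    rw [intervalIntegral.integral_comp_sub_left, sub_zero, ← hAC]; ring
  rw [hdiff, enorm_neg, ← ofReal_norm,
    intervalIntegral.norm_integral_eq_norm_integral_uIoc, ofReal_norm]
  exact enorm_integral_le_lintegral_enorm _

lemma lintegral_enorm_comp_sub_sub_le_of_sub_eq_intervalIntegral
    (hAC : ∀ a b : ℝ, g b - g a = ∫ x in a..b, g' x) (hg' : AEStronglyMeasurable g') (t : ℝ) :
    ∫⁻ x, ‖g (x - t) - g x‖ₑ ≤ ‖t‖ₑ * ∫⁻ x, ‖g' x‖ₑ := calc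
  _ ≤ ∫⁻ x, ∫⁻ s in Ι 0 t, ‖g' (x - s)‖ₑ :=
    lintegral_mono fun x => enorm_comp_sub_sub_le_of_sub_eq_intervalIntegral hAC x t
  _ = ∫⁻ s in Ι 0 t, ∫⁻ x, ‖g' (x - s)‖ₑ :=
    lintegral_lintegral_swap (hg'.comp_quasiMeasurePreserving
      (quasiMeasurePreserving_sub_of_right_invariant volume _)).enorm
  _ = ∫⁻ _ in Ι 0 t, ∫⁻ x, ‖g' x‖ₑ := by
    simp_rw [lintegral_sub_right_eq_self fun x => ‖g' x‖ₑ]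
  _ = ‖t‖ₑ * ∫⁻ x, ‖g' x‖ₑ := by
    rw [setLIntegral_const, Real.volume_uIoc, sub_zero, Real.enorm_eq_ofReal_abs, mul_comm]

lemma lintegral_enorm_smoothing_sub_le {k : ℝ → ℝ} (hk : Integrable k) (hk1 : ∫ t, k t = 1)
    (hAC : ∀ a b : ℝ, g b - g a = ∫ x in a..b, g' x) (hg' : Integrable g') :
    ∫⁻ x, ‖(∫ t, g (x - t) * k t) - g x‖ₑ ≤ (∫⁻ t, ‖t‖ₑ * ‖k t‖ₑ) * ∫⁻ x, ‖g' x‖ₑ := by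
  have hg := continuous_of_sub_eq_intervalIntegral hAC hg'
  have hbdd (y : ℝ) : ‖g y‖ ≤ |g 0| + ∫ x, |g' x| := by
    have := abs_sub_le_integral_abs_of_sub_eq_intervalIntegral hAC hg' 0 y
    rw [Real.norm_eq_abs]
    linarith [abs_sub_abs_le_abs_sub (g y) (g 0)]
  have hrepr (x : ℝ) : (∫ t, g (x - t) * k t) - g x = ∫ t, (g (x - t) - g x) * k t := by
    have hint : Integrable fun t => g (x - t) * k t :=
      hk.bdd_mul (by fun_prop) (.of_forall fun t => hbdd (x - t))
    simp_rw [sub_mul]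
    rw [integral_sub hint (hk.const_mul (g x)), integral_const_mul, hk1, mul_one]
  have hmeas : AEMeasurable (Function.uncurry fun x t => ‖g (x - t) - g x‖ₑ * ‖k t‖ₑ)
      (volume.prod volume) :=
    (Continuous.measurable (by fun_prop)).aemeasurable.mul hk.1.enorm.comp_snd
  calc ∫⁻ x, ‖(∫ t, g (x - t) * k t) - g x‖ₑ
      = ∫⁻ x, ‖∫ t, (g (x - t) - g x) * k t‖ₑ := by simp_rw [hrepr]
    _ ≤ ∫⁻ x, ∫⁻ t, ‖g (x - t) - g x‖ₑ * ‖k t‖ₑ := lintegral_mono fun x => by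
      simpa only [enorm_mul] using
        enorm_integral_le_lintegral_enorm fun t => (g (x - t) - g x) * k t
    _ = ∫⁻ t, (∫⁻ x, ‖g (x - t) - g x‖ₑ) * ‖k t‖ₑ := by
      rw [lintegral_lintegral_swap hmeas]
      simp_rw [lintegral_mul_const' _ _ enorm_ne_top]
    _ ≤ ∫⁻ t, ‖t‖ₑ * (∫⁻ x, ‖g' x‖ₑ) * ‖k t‖ₑ := lintegral_mono fun t => by
      gcongr
      exact lintegral_enorm_comp_sub_sub_le_of_sub_eq_intervalIntegral hAC hg'.1 t
    _ = (∫⁻ t, ‖t‖ₑ * ‖k t‖ₑ) * ∫⁻ x, ‖g' x‖ₑ := by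
      rw [← lintegral_mul_const' _ _ hg'.2.ne]
      congr 1 with t
      ring

theorem integral_abs_smoothing_sub_le {k : ℝ → ℝ} (hk : Integrable k) (hk1 : ∫ t, k t = 1)
    (hmk : Integrable fun t => t * k t)
    (hAC : ∀ a b : ℝ, g b - g a = ∫ x in a..b, g' x) (hg' : Integrable g') :
    ∫ x, |(∫ t, g (x - t) * k t) - g x| ≤ (∫ t, |t * k t|) * ∫ x, |g' x| := by
  have hnonneg {f : ℝ → ℝ} : 0 ≤ ∫ x, |f x| := integral_nonneg fun _ => abs_nonneg _
  refine integral_norm_le_of_lintegral_enorm_le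
    (f := fun x => (∫ t, g (x - t) * k t) - g x) (mul_nonneg hnonneg hnonneg) ?_
  rw [ENNReal.ofReal_mul hnonneg]
  simp only [← Real.norm_eq_abs]
  rw [ofReal_integral_norm_eq_lintegral_enorm hmk, ofReal_integral_norm_eq_lintegral_enorm hg']
  simpa only [enorm_mul] using lintegral_enorm_smoothing_sub_le hk hk1 hAC hg'

end AbsolutelyContinuous

section Rescaling

variable {ψ : ℝ → ℝ} {l : ℝ}

lemma MeasureTheory.Integrable.inv_mul_comp_div (hψ : Integrable ψ) (hl : l ≠ 0) :
    Integrable fun t => l⁻¹ * ψ (t / l) :=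
  (hψ.comp_div hl).const_mul _

lemma integral_inv_mul_comp_div (ψ : ℝ → ℝ) (hl : 0 < l) :
    ∫ t, l⁻¹ * ψ (t / l) = ∫ u, ψ u := by
  rw [integral_const_mul, Measure.integral_comp_div, abs_of_pos hl, smul_eq_mul,
    inv_mul_cancel_left₀ hl.ne']

lemma integrable_mul_inv_mul_comp_div (hψ : Integrable fun u => u * ψ u) (hl : l ≠ 0) :
    Integrable fun t => t * (l⁻¹ * ψ (t / l)) := by
  simpa only [div_eq_mul_inv, mul_assoc, mul_comm l⁻¹] using hψ.comp_div hl

lemma integral_abs_mul_inv_mul_comp_div (ψ : ℝ → ℝ) (hl : 0 < l) :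
    ∫ t, |t * (l⁻¹ * ψ (t / l))| = l * ∫ u, |u * ψ u| := by
  have h (t : ℝ) : t * (l⁻¹ * ψ (t / l)) = t / l * ψ (t / l) := by ring
  simp_rw [h]
  rw [Measure.integral_comp_div (fun u => |u * ψ u|), abs_of_pos hl, smul_eq_mul]

end Rescaling

lemma gaussPdf_eq_gaussianPDFReal : gaussPdf = gaussianPDFReal 0 1 := by
  ext x
  simp [gaussPdf, gaussianPDFReal]

lemma integrable_gaussPdf : Integrable gaussPdf :=
  gaussPdf_eq_gaussianPDFReal ▸ integrable_gaussianPDFReal 0 1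

lemma integral_gaussPdf : ∫ x, gaussPdf x = 1 := by
  rw [gaussPdf_eq_gaussianPDFReal, integral_gaussianPDFReal_eq_one 0 one_ne_zero]

lemma integrable_mul_gaussPdf : Integrable fun x => x * gaussPdf x := by
  have h (x : ℝ) : x * gaussPdf x = (√(2 * π))⁻¹ * (x * exp (-(1 / 2) * x ^ 2)) := by
    rw [gaussPdf]
    ring_nf
  simp_rw [h]
  exact (integrable_mul_exp_neg_mul_sq (by norm_num)).const_mul _

lemma integral_Ioi_mul_exp_neg_mul_sq {b : ℝ} (hb : 0 < b) :
    ∫ x in Ioi (0 : ℝ), x * exp (-b * x ^ 2) = (2 * b)⁻¹ := by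
  have h := integral_mul_cexp_neg_mul_sq (b := (b : ℂ)) (by simpa using hb)
  have hcast (x : ℝ) : (x : ℂ) * Complex.exp (-(b : ℂ) * (x : ℂ) ^ 2)
      = ((x * exp (-b * x ^ 2) : ℝ) : ℂ) := by
    push_cast; rfl
  simp_rw [hcast] at h
  rw [integral_complex_ofReal] at h
  exact_mod_cast h

lemma integral_abs_mul_gaussPdf : ∫ x, |x * gaussPdf x| = √(2 / π) := by
  have hsq (x : ℝ) : |x * gaussPdf x| = (√(2 * π))⁻¹ * (|x| * exp (-(1 / 2) * |x| ^ 2)) := by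
    rw [gaussPdf, abs_mul, abs_mul, abs_exp, abs_inv, abs_of_nonneg (sqrt_nonneg _), sq_abs]
    ring_nf
  simp_rw [hsq, integral_const_mul]
  rw [integral_comp_abs (f := fun x => x * exp (-(1 / 2) * x ^ 2)),
    integral_Ioi_mul_exp_neg_mul_sq (by norm_num)]
  rw [sqrt_div' _ pi_pos.le, sqrt_mul zero_le_two]
  have : √2 ≠ 0 := by positivity
  have : √π ≠ 0 := by positivity
  field_simp
  norm_num [Real.sq_sqrt]

theorem L1_smoothing_bias_bound_general
    (g g' : ℝ → ℝ)
    (hAC : ∀ a b : ℝ, g b - g a = ∫ x in a..b, g' x)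
    (hg' : Integrable g')
    (l : ℝ) (hl : 0 < l) :
    ∫ x, |(l⁻¹ * ∫ t, g (x - t) * gaussPdf (t / l)) - g x| ≤
      4 * l * Real.sqrt (2 / Real.pi) * ∫ z, |g' z| := by
  have hsmoothing (x : ℝ) : l⁻¹ * ∫ t, g (x - t) * gaussPdf (t / l)
      = ∫ t, g (x - t) * (l⁻¹ * gaussPdf (t / l)) := by
    rw [← integral_const_mul]
    congr 1 with t
    ring
  have hkernel_mass : ∫ t, l⁻¹ * gaussPdf (t / l) = 1 := by
    rw [integral_inv_mul_comp_div _ hl, integral_gaussPdf]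
  have hbias_nonneg : 0 ≤ l * √(2 / π) * ∫ z, |g' z| := by
    have : 0 ≤ ∫ z, |g' z| := integral_nonneg fun _ => abs_nonneg _
    positivity
  simp_rw [hsmoothing]
  calc _ ≤ (∫ t, |t * (l⁻¹ * gaussPdf (t / l))|) * ∫ z, |g' z| :=
        integral_abs_smoothing_sub_le (integrable_gaussPdf.inv_mul_comp_div hl.ne') hkernel_mass
          (integrable_mul_inv_mul_comp_div integrable_mul_gaussPdf hl.ne') hAC hg'
    _ = l * √(2 / π) * ∫ z, |g' z| := by
        rw [integral_abs_mul_inv_mul_comp_div _ hl, integral_abs_mul_gaussPdf]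
    _ ≤ 4 * l * √(2 / π) * ∫ z, |g' z| := by linarith

/-- **L¹ smoothing bias bound.**  If `g` is an absolutely continuous probability density on `ℝ`
with Lebesgue-integrable weak derivative `g'`, and `g_λ(x) = λ⁻¹ ∫ g(x−t) φ(t/λ) dt` is its
Gaussian smoothing at bandwidth `λ > 0`, then
`∫ |g_λ − g| ≤ 4 λ E|Z| ∫|g'|` where `E|Z| = √(2/π)` is the absolute first moment of a
standard Gaussian. -/
theorem L1_smoothing_bias_bound
    (g g' : ℝ → ℝ) (hg : IsProbDensity g)
    (hAC : ∀ a b : ℝ, g b - g a = ∫ x in a..b, g' x)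
    (hg' : Integrable g')
    (l : ℝ) (hl : 0 < l) :
    ∫ x, |(l⁻¹ * ∫ t, g (x - t) * gaussPdf (t / l)) - g x| ≤
      4 * l * Real.sqrt (2 / Real.pi) * ∫ z, |g' z| :=
  L1_smoothing_bias_bound_general g g' hAC hg' l hl
end
end

section
/- (Fisher information matrix of (Δ, μ, λ).) In the one-sample representation of the two-sample model, assume additionally ∫ s(x) g(x) dx = 0. Then E[l_Δ(Z,U)²] = (1−λ)·I, E[l_Δ(Z,U)·l_μ(Z,U)] = (1−λ)·I, E[l_μ(Z,U)²] = I, E[l_λ(Z,U)²] = λ⁻¹ + (1−λ)⁻¹, E[l_Δ(Z,U)·l_λ(Z,U)] = 0, and E[l_μ(Z,U)·l_λ(Z,U)] = 0; that is, the Fisher information matrix of the parameters (Δ, μ, λ) equals the 3×3 matrix with rows ((1−λ)I, (1−λ)I, 0), ((1−λ)I, I, 0), (0, 0, λ⁻¹+(1−λ)⁻¹). -/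
open MeasureTheory

noncomputable section

/-- The joint law of `(Z,U)` in the one-sample representation of the two-sample model:
`Z ~ Bernoulli(λ)`; conditionally on `Z = 1`, `U` has density `g(·−μ)`; conditionally on
`Z = 0`, `U` has density `g(·−μ−Δ)`. -/
def jointLaw (l μ Δ : ℝ) (g : ℝ → ℝ) : Measure (ℝ × ℝ) :=
  (ENNReal.ofReal l) •
      ((Measure.dirac (1 : ℝ)).prod
        (volume.withDensity fun u => ENNReal.ofReal (g (u - μ)))) +
    (ENNReal.ofReal (1 - l)) •
      ((Measure.dirac (0 : ℝ)).prod
        (volume.withDensity fun u => ENNReal.ofReal (g (u - μ - Δ))))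

/-- Score for `Δ`: `l_Δ(z,u) = −(1−z)·s(u−μ−Δ)`. -/
def scoreDelta (s : ℝ → ℝ) (μ Δ : ℝ) (z u : ℝ) : ℝ := -(1 - z) * s (u - μ - Δ)

/-- Score for `μ`: `l_μ(z,u) = −z·s(u−μ) − (1−z)·s(u−μ−Δ)`. -/
def scoreMu (s : ℝ → ℝ) (μ Δ : ℝ) (z u : ℝ) : ℝ :=
  -z * s (u - μ) - (1 - z) * s (u - μ - Δ)

/-- Score for `λ`: `l_λ(z,u) = z/λ − (1−z)/(1−λ)`. -/
def scoreLambda (l : ℝ) (z : ℝ) : ℝ := z / l - (1 - z) / (1 - l)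

/-- The efficient score `l*(z,u) = z(1−λ)·s(u−μ) − λ(1−z)·s(u−μ−Δ)`. -/
def scoreStar (s : ℝ → ℝ) (l μ Δ : ℝ) (z u : ℝ) : ℝ :=
  z * (1 - l) * s (u - μ) - l * (1 - z) * s (u - μ - Δ)

/-!
Conditioning on `Z` splits every expectation into `λ` times an integral against `g(· − μ)` plus
`1 − λ` times an integral against `g(· − μ − Δ)`. After the shift `u = x + μ` resp.
`u = x + μ + Δ`, each product of two scores becomes a quadratic polynomial in `s(x)`, so each
entry of the matrix is a combination of `∫ s² g = I`, `∫ s g = 0` and `∫ g = 1`.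
None of these integrals is a junk value: `s` is measurable because the hypothesis `g c − g a = ∫ₐᶜ g'` forces
`g'` to be locally integrable (`g` is not constant), and then `|s| ≤ s² + 1` makes `s g`
integrable.
-/

theorem exists_ne_of_integral_ne_zero {g : ℝ → ℝ} (h : ∫ x, g x ≠ 0) : ∃ a b, g a ≠ g b := by
  by_contra! hconst
  rw [show g = fun _ => g 0 from funext fun x => hconst x 0] at h
  simp [Measure.real] at h

theorem intervalIntegrable_of_sub_eq_intervalIntegral {g g' : ℝ → ℝ}
    (hAC : ∀ a c, g c - g a = ∫ x in a..c, g' x) {a b : ℝ} (hab : g a ≠ g b) (p q : ℝ) :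
    IntervalIntegrable g' volume p q := by
  -- off the intervals where `g'` is integrable the integral is the junk value `0`
  have eq_of_not : ∀ {x y}, ¬ IntervalIntegrable g' volume x y → g x = g y := fun {x y} hxy => by
    have := hAC x y
    rw [intervalIntegral.integral_undef hxy] at this
    linarith
  have hab' : IntervalIntegrable g' volume a b := by_contra fun h => hab (eq_of_not h)
  have from_a : ∀ c, IntervalIntegrable g' volume a c := fun c => by_contra fun hac =>
    have hbc : ¬ IntervalIntegrable g' volume b c := fun hbc => hac (hab'.trans hbc)
    hab ((eq_of_not hac).trans (eq_of_not hbc).symm)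
  exact (from_a p).symm.trans (from_a q)

theorem locallyIntegrable_of_forall_intervalIntegrable {f : ℝ → ℝ}
    (hf : ∀ a b, IntervalIntegrable f volume a b) : LocallyIntegrable f :=
  fun x => ⟨Set.Icc (x - 1) (x + 1), Icc_mem_nhds (by linarith) (by linarith),
    (intervalIntegrable_iff_integrableOn_Icc_of_le (by linarith)).1 (hf _ _)⟩

theorem IsProbDensity.locallyIntegrable_of_sub_eq_intervalIntegral {g g' : ℝ → ℝ}
    (hg : IsProbDensity g) (hAC : ∀ a c, g c - g a = ∫ x in a..c, g' x) :
    LocallyIntegrable g' := by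
  obtain ⟨a, b, hab⟩ := exists_ne_of_integral_ne_zero (hg.2.2 ▸ one_ne_zero)
  exact locallyIntegrable_of_forall_intervalIntegrable
    (intervalIntegrable_of_sub_eq_intervalIntegral hAC hab)

theorem integrable_mul_of_integrable_sq_mul {s w : ℝ → ℝ} (hs : AEStronglyMeasurable s)
    (hw0 : ∀ x, 0 ≤ w x) (hw : Integrable w) (hsw : Integrable fun x => s x ^ 2 * w x) :
    Integrable fun x => s x * w x := by
  refine (hsw.add hw).mono' (hs.mul hw.1) (ae_of_all _ fun x => ?_)
  have : |s x| ≤ s x ^ 2 + 1 := by nlinarith [sq_abs (s x), abs_nonneg (s x)]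
  rw [Real.norm_eq_abs, abs_mul, abs_of_nonneg (hw0 x), Pi.add_apply]
  nlinarith [hw0 x]

section ShiftedComponent

variable {g : ℝ → ℝ} (z c : ℝ) (ψ : ℝ × ℝ → ℝ)

theorem integrable_dirac_prod_withDensity_shift_iff (hg0 : ∀ x, 0 ≤ g x) (hg : AEMeasurable g) :
    Integrable ψ ((Measure.dirac z).prod
        (volume.withDensity fun u => ENNReal.ofReal (g (u - c)))) ↔
      Integrable fun x => g x * ψ (z, x + c) := by
  have hshift : AEMeasurable (fun u => g (u - c)) :=
    hg.comp_quasiMeasurePreserving (measurePreserving_sub_right volume c).quasiMeasurePreserving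
  rw [Measure.dirac_prod, (measurableEmbedding_prodMk_left z).integrable_map_iff,
    integrable_withDensity_iff_integrable_smul₀' hshift.ennreal_ofReal (by simp)]
  have heq : (fun u => (ENNReal.ofReal (g (u - c))).toReal • (ψ ∘ Prod.mk z) u)
      = (fun x => g x * ψ (z, x + c)) ∘ (fun u => u - c) := by
    funext u
    simp [ENNReal.toReal_ofReal (hg0 _)]
  rw [heq]
  exact (measurePreserving_sub_right volume c).integrable_comp_emb
    (MeasurableEquiv.subRight c).measurableEmbedding

theorem integral_dirac_prod_withDensity_shift (hg0 : ∀ x, 0 ≤ g x) (hg : AEMeasurable g) :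
    ∫ p, ψ p ∂(Measure.dirac z).prod
        (volume.withDensity fun u => ENNReal.ofReal (g (u - c))) =
      ∫ x, g x * ψ (z, x + c) := by
  have hshift : AEMeasurable (fun u => g (u - c)) :=
    hg.comp_quasiMeasurePreserving (measurePreserving_sub_right volume c).quasiMeasurePreserving
  rw [Measure.dirac_prod, (measurableEmbedding_prodMk_left z).integral_map,
    integral_withDensity_eq_integral_toReal_smul₀ hshift.ennreal_ofReal (by simp),
    ← integral_sub_right_eq_self (fun x => g x * ψ (z, x + c)) c]
  congr 1 with u
  simp [ENNReal.toReal_ofReal (hg0 _)]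

end ShiftedComponent

theorem integrable_mul_quadratic {s w : ℝ → ℝ} (hs : AEStronglyMeasurable s) (hw0 : ∀ x, 0 ≤ w x)
    (hw : Integrable w) (hsw : Integrable fun x => s x ^ 2 * w x) (a b c : ℝ) :
    Integrable fun x => w x * (a * s x ^ 2 + b * s x + c) := by
  have hs1 := integrable_mul_of_integrable_sq_mul hs hw0 hw hsw
  refine (((hsw.const_mul a).add (hs1.const_mul b)).add (hw.const_mul c)).congr
    (ae_of_all _ fun x => ?_)
  simp only [Pi.add_apply]
  ring

theorem integral_mul_quadratic {s w : ℝ → ℝ} (hs : AEStronglyMeasurable s) (hw0 : ∀ x, 0 ≤ w x)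
    (hw : Integrable w) (hsw : Integrable fun x => s x ^ 2 * w x) (a b c : ℝ) :
    ∫ x, w x * (a * s x ^ 2 + b * s x + c) =
      a * (∫ x, s x ^ 2 * w x) + b * (∫ x, s x * w x) + c * ∫ x, w x := by
  have hs1 := integrable_mul_of_integrable_sq_mul hs hw0 hw hsw
  calc ∫ x, w x * (a * s x ^ 2 + b * s x + c)
      = ∫ x, (a * (s x ^ 2 * w x) + b * (s x * w x)) + c * w x := by
        congr 1 with x
        ring
    _ = a * (∫ x, s x ^ 2 * w x) + b * (∫ x, s x * w x) + c * ∫ x, w x := by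
        rw [integral_add (f := fun x => a * (s x ^ 2 * w x) + b * (s x * w x))
            ((hsw.const_mul a).add (hs1.const_mul b)) (hw.const_mul c),
          integral_add (hsw.const_mul a) (hs1.const_mul b), integral_const_mul,
          integral_const_mul, integral_const_mul]

section JointLaw

variable {l μ Δ : ℝ} {g : ℝ → ℝ} {ψ : ℝ × ℝ → ℝ}

theorem jointLaw_eq_add (l μ Δ : ℝ) (g : ℝ → ℝ) :
    jointLaw l μ Δ g =
      ENNReal.ofReal l • (Measure.dirac 1).prod
          (volume.withDensity fun u => ENNReal.ofReal (g (u - μ))) +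
        ENNReal.ofReal (1 - l) • (Measure.dirac 0).prod
          (volume.withDensity fun u => ENNReal.ofReal (g (u - (μ + Δ)))) := by
  simp only [jointLaw, sub_sub]

theorem integrable_jointLaw (hg0 : ∀ x, 0 ≤ g x) (hg : AEMeasurable g)
    (h1 : Integrable fun x => g x * ψ (1, x + μ))
    (h0 : Integrable fun x => g x * ψ (0, x + (μ + Δ))) :
    Integrable ψ (jointLaw l μ Δ g) := by
  rw [jointLaw_eq_add]
  exact (((integrable_dirac_prod_withDensity_shift_iff 1 μ ψ hg0 hg).2 h1).smul_measure
    ENNReal.ofReal_ne_top).add_measure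
    (((integrable_dirac_prod_withDensity_shift_iff 0 _ ψ hg0 hg).2 h0).smul_measure
      ENNReal.ofReal_ne_top)

theorem integral_jointLaw (hl0 : 0 ≤ l) (hl1 : l ≤ 1) (hg0 : ∀ x, 0 ≤ g x)
    (hg : AEMeasurable g) (h1 : Integrable fun x => g x * ψ (1, x + μ))
    (h0 : Integrable fun x => g x * ψ (0, x + (μ + Δ))) :
    ∫ p, ψ p ∂jointLaw l μ Δ g =
      l * (∫ x, g x * ψ (1, x + μ)) + (1 - l) * ∫ x, g x * ψ (0, x + (μ + Δ)) := by
  have hJ := integrable_jointLaw (l := l) hg0 hg h1 h0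
  rw [jointLaw_eq_add] at hJ ⊢
  rw [integral_add_measure (integrable_add_measure.1 hJ).1 (integrable_add_measure.1 hJ).2,
    integral_smul_measure, integral_smul_measure,
    integral_dirac_prod_withDensity_shift _ _ _ hg0 hg,
    integral_dirac_prod_withDensity_shift _ _ _ hg0 hg,
    ENNReal.toReal_ofReal hl0, ENNReal.toReal_ofReal (sub_nonneg.2 hl1), smul_eq_mul, smul_eq_mul]

end JointLaw

section Scores

variable (s : ℝ → ℝ) (l μ Δ x : ℝ)

@[simp] theorem scoreDelta_one (u : ℝ) : scoreDelta s μ Δ 1 u = 0 := by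
  simp [scoreDelta]

@[simp] theorem scoreDelta_zero_add : scoreDelta s μ Δ 0 (x + (μ + Δ)) = -s x := by
  simp [scoreDelta, sub_sub]

@[simp] theorem scoreMu_one_add : scoreMu s μ Δ 1 (x + μ) = -s x := by
  simp [scoreMu]

@[simp] theorem scoreMu_zero_add : scoreMu s μ Δ 0 (x + (μ + Δ)) = -s x := by
  simp [scoreMu, sub_sub]

@[simp] theorem scoreLambda_one : scoreLambda l 1 = l⁻¹ := by
  simp [scoreLambda]

@[simp] theorem scoreLambda_zero : scoreLambda l 0 = -(1 - l)⁻¹ := by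
  simp [scoreLambda]

end Scores

theorem integral_comp_eq_of_quadratic {Ω : Type*} [MeasurableSpace Ω] {P : Measure Ω}
    {Z U : Ω → ℝ} (hZ : Measurable Z) (hU : Measurable U) {l μ Δ : ℝ} (hl0 : 0 ≤ l)
    (hl1 : l ≤ 1) {g s : ℝ → ℝ} (hg : IsProbDensity g) (hs : AEStronglyMeasurable s)
    (hFI : Integrable fun x => s x ^ 2 * g x) (hmean : ∫ x, s x * g x = 0)
    (hlaw : P.map (fun ω => (Z ω, U ω)) = jointLaw l μ Δ g) (ψ : ℝ × ℝ → ℝ)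
    (a₁ b₁ c₁ a₀ b₀ c₀ : ℝ) (h₁ : ∀ x, ψ (1, x + μ) = a₁ * s x ^ 2 + b₁ * s x + c₁)
    (h₀ : ∀ x, ψ (0, x + (μ + Δ)) = a₀ * s x ^ 2 + b₀ * s x + c₀) :
    ∫ ω, ψ (Z ω, U ω) ∂P =
      l * (a₁ * (∫ x, s x ^ 2 * g x) + c₁) + (1 - l) * (a₀ * (∫ x, s x ^ 2 * g x) + c₀) := by
  obtain ⟨hg0, hgi, hg1⟩ := hg
  have hψ₁ : Integrable fun x => g x * ψ (1, x + μ) := by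
    simpa only [h₁] using integrable_mul_quadratic hs hg0 hgi hFI a₁ b₁ c₁
  have hψ₀ : Integrable fun x => g x * ψ (0, x + (μ + Δ)) := by
    simpa only [h₀] using integrable_mul_quadratic hs hg0 hgi hFI a₀ b₀ c₀
  have hψ := integrable_jointLaw (l := l) hg0 hgi.aemeasurable hψ₁ hψ₀
  rw [← integral_map (hZ.prodMk hU).aemeasurable (hlaw ▸ hψ.aestronglyMeasurable), hlaw,
    integral_jointLaw hl0 hl1 hg0 hgi.aemeasurable hψ₁ hψ₀]
  simp only [h₁, h₀, integral_mul_quadratic hs hg0 hgi hFI, hmean, hg1]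
  ring

theorem fisher_information_matrix_entries_general
    {Ω : Type*} [MeasurableSpace Ω] (P : Measure Ω)
    (Z U : Ω → ℝ) (hZ : Measurable Z) (hU : Measurable U)
    (l μ Δ : ℝ) (hl0 : 0 < l) (hl1 : l < 1)
    (g g' : ℝ → ℝ) (hg : IsProbDensity g)
    (hAC : ∀ a c : ℝ, g c - g a = ∫ x in a..c, g' x)
    (hFI : Integrable fun x => (g' x / g x) ^ 2 * g x)
    (hmean : ∫ x, (g' x / g x) * g x = 0)
    (hlaw : P.map (fun ω => (Z ω, U ω)) = jointLaw l μ Δ g) :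
    (∫ ω, (scoreDelta (fun x => g' x / g x) μ Δ (Z ω) (U ω)) ^ 2 ∂P =
        (1 - l) * ∫ x, (g' x / g x) ^ 2 * g x) ∧
      (∫ ω, scoreDelta (fun x => g' x / g x) μ Δ (Z ω) (U ω) *
          scoreMu (fun x => g' x / g x) μ Δ (Z ω) (U ω) ∂P =
        (1 - l) * ∫ x, (g' x / g x) ^ 2 * g x) ∧
      (∫ ω, (scoreMu (fun x => g' x / g x) μ Δ (Z ω) (U ω)) ^ 2 ∂P =
        ∫ x, (g' x / g x) ^ 2 * g x) ∧
      (∫ ω, (scoreLambda l (Z ω)) ^ 2 ∂P = l⁻¹ + (1 - l)⁻¹) ∧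
      (∫ ω, scoreDelta (fun x => g' x / g x) μ Δ (Z ω) (U ω) *
          scoreLambda l (Z ω) ∂P = 0) ∧
      (∫ ω, scoreMu (fun x => g' x / g x) μ Δ (Z ω) (U ω) *
          scoreLambda l (Z ω) ∂P = 0) := by
  have hs : AEStronglyMeasurable fun x => g' x / g x :=
    ((hg.locallyIntegrable_of_sub_eq_intervalIntegral hAC).aestronglyMeasurable.aemeasurable.div
      hg.2.1.aemeasurable).aestronglyMeasurable
  have key := integral_comp_eq_of_quadratic hZ hU hl0.le hl1.le hg hs hFI hmean hlaw
  refine ⟨?_, ?_, ?_, ?_, ?_, ?_⟩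
  · refine (key (fun p => scoreDelta _ μ Δ p.1 p.2 ^ 2) 0 0 0 1 0 0
      (fun x => by simp) (fun x => by simp)).trans ?_
    ring
  · refine (key (fun p => scoreDelta _ μ Δ p.1 p.2 * scoreMu _ μ Δ p.1 p.2) 0 0 0 1 0 0
      (fun x => by simp) (fun x => by simp; ring)).trans ?_
    ring
  · refine (key (fun p => scoreMu _ μ Δ p.1 p.2 ^ 2) 1 0 0 1 0 0
      (fun x => by simp) (fun x => by simp)).trans ?_
    ring
  · refine (key (fun p => scoreLambda l p.1 ^ 2) 0 0 (l⁻¹ ^ 2) 0 0 ((1 - l)⁻¹ ^ 2)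
      (fun x => by simp) (fun x => by simp)).trans ?_
    field_simp [hl0.ne', (sub_pos.2 hl1).ne']
    ring
  · refine (key (fun p => scoreDelta _ μ Δ p.1 p.2 * scoreLambda l p.1) 0 0 0 0 (1 - l)⁻¹ 0
      (fun x => by simp) (fun x => by simp; ring)).trans ?_
    ring
  · refine (key (fun p => scoreMu _ μ Δ p.1 p.2 * scoreLambda l p.1) 0 (-l⁻¹) 0 0 (1 - l)⁻¹ 0
      (fun x => by simp; ring) (fun x => by simp; ring)).trans ?_
    ring

/-- **Fisher information matrix of `(Δ, μ, λ)`.**  In the one-sample representation of the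
two-sample model, assuming additionally `∫ s g = 0`, the entries of the Fisher information
matrix of `(Δ, μ, λ)` are: `E[l_Δ²] = (1−λ)I`, `E[l_Δ l_μ] = (1−λ)I`, `E[l_μ²] = I`,
`E[l_λ²] = λ⁻¹ + (1−λ)⁻¹`, `E[l_Δ l_λ] = 0`, `E[l_μ l_λ] = 0`, with `I = ∫ s² g`. -/
theorem fisher_information_matrix_entries
    {Ω : Type*} [MeasurableSpace Ω] (P : Measure Ω) [IsProbabilityMeasure P]
    (Z U : Ω → ℝ) (hZ : Measurable Z) (hU : Measurable U)
    (l μ Δ : ℝ) (hl0 : 0 < l) (hl1 : l < 1)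
    (g g' : ℝ → ℝ) (hg : IsProbDensity g)
    (hAC : ∀ a c : ℝ, g c - g a = ∫ x in a..c, g' x)
    (hFI : Integrable fun x => (g' x / g x) ^ 2 * g x)
    (hmean : ∫ x, (g' x / g x) * g x = 0)
    (hlaw : P.map (fun ω => (Z ω, U ω)) = jointLaw l μ Δ g) :
    (∫ ω, (scoreDelta (fun x => g' x / g x) μ Δ (Z ω) (U ω)) ^ 2 ∂P =
        (1 - l) * ∫ x, (g' x / g x) ^ 2 * g x) ∧
      (∫ ω, scoreDelta (fun x => g' x / g x) μ Δ (Z ω) (U ω) *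
          scoreMu (fun x => g' x / g x) μ Δ (Z ω) (U ω) ∂P =
        (1 - l) * ∫ x, (g' x / g x) ^ 2 * g x) ∧
      (∫ ω, (scoreMu (fun x => g' x / g x) μ Δ (Z ω) (U ω)) ^ 2 ∂P =
        ∫ x, (g' x / g x) ^ 2 * g x) ∧
      (∫ ω, (scoreLambda l (Z ω)) ^ 2 ∂P = l⁻¹ + (1 - l)⁻¹) ∧
      (∫ ω, scoreDelta (fun x => g' x / g x) μ Δ (Z ω) (U ω) *
          scoreLambda l (Z ω) ∂P = 0) ∧
      (∫ ω, scoreMu (fun x => g' x / g x) μ Δ (Z ω) (U ω) *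
          scoreLambda l (Z ω) ∂P = 0) :=
  fisher_information_matrix_entries_general P Z U hZ hU l μ Δ hl0 hl1 g g' hg hAC hFI hmean hlaw
end
end
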